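/- arXiv:1807.09646 — 4 statements merged into one kernel-verified Lean document; each statement's English description precedes it below -/
import Mathlib

section
/- Let ε > 0 and let (c_n), (b_n) be sequences of positive integers such that for all sufficiently large n, (b_{n+1}/c_{n+1})^{1/(1+ε)} ≥ (b_n/c_n)^{1/(1+ε)} + 1. Then the series β = Σ_{n=1}^∞ c_n/b_n converges, and there is a constant C > 0 such that for all sufficiently large N, β - Σ_{n=1}^{N} c_n/b_n < C·(c_{N+1}/b_{N+1})^{ε/(1+ε)}. -/
/-!
Put `x n = (b n / c n) ^ (1 / (1 + ε))`, so that `c n / b n = x n ^ (-(1 + ε))` and the hypothesis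
says `x (n + 1) ≥ x n + 1` eventually. Hence `x (N + s) ≥ x N + s`, and the tail from `N` is dominated
by `∑ₛ (x N + s) ^ (-(1 + ε))`. Comparing each term with a step of the telescoping sum of
`t ↦ t ^ (-ε) / ε` (mean value theorem) bounds this by `(1 + 1/ε) x N ^ (-ε)`, and
`x N ^ (-ε) = (c N / b N) ^ (ε / (1 + ε))`.
-/

open Finset

lemma mul_rpow_succ_le_rpow_sub_rpow {ε a : ℝ} (hε : 0 ≤ ε) (ha : 0 < a) :
    ε * (a + 1) ^ (-ε - 1) ≤ a ^ (-ε) - (a + 1) ^ (-ε) := by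
  have hcont : ContinuousOn (fun t : ℝ => t ^ (-ε)) (Set.Icc a (a + 1)) :=
    continuousOn_id.rpow_const fun t ht => Or.inl (ha.trans_le ht.1).ne'
  have hderiv : ∀ t ∈ Set.Ioo a (a + 1), HasDerivAt (fun t : ℝ => t ^ (-ε)) (-ε * t ^ (-ε - 1)) t :=
    fun t ht => Real.hasDerivAt_rpow_const (Or.inl (ha.trans ht.1).ne')
  obtain ⟨ξ, hξ, hslope⟩ := exists_hasDerivAt_eq_slope _ _ (lt_add_one a) hcont hderiv
  have hξ_le : (a + 1) ^ (-ε - 1) ≤ ξ ^ (-ε - 1) :=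
    Real.rpow_le_rpow_of_nonpos (ha.trans hξ.1) hξ.2.le (by linarith)
  rw [add_sub_cancel_left, div_one] at hslope
  nlinarith

lemma mul_sum_range_rpow_add_succ_le {ε x : ℝ} (hε : 0 ≤ ε) (hx : 0 < x) (M : ℕ) :
    ε * ∑ s ∈ range M, (x + (s + 1 : ℕ)) ^ (-ε - 1) ≤ x ^ (-ε) :=
  calc ε * ∑ s ∈ range M, (x + (s + 1 : ℕ)) ^ (-ε - 1)
      ≤ ∑ s ∈ range M, ((x + s) ^ (-ε) - (x + (s + 1 : ℕ)) ^ (-ε)) := by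
        rw [mul_sum]
        gcongr with s
        rw [Nat.cast_succ, ← add_assoc]
        exact mul_rpow_succ_le_rpow_sub_rpow hε (by positivity)
    _ = x ^ (-ε) - (x + M) ^ (-ε) := by
        rw [sum_range_sub' (fun s : ℕ => (x + s) ^ (-ε)), Nat.cast_zero, add_zero]
    _ ≤ x ^ (-ε) := sub_le_self _ (by positivity)

lemma sum_range_rpow_add_le {ε x : ℝ} (hε : 0 < ε) (hx : 0 < x) (M : ℕ) :
    ∑ s ∈ range M, (x + s) ^ (-ε - 1) ≤ x ^ (-ε - 1) + x ^ (-ε) / ε := by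
  cases M with
  | zero => simp only [range_zero, sum_empty]; positivity
  | succ M =>
    rw [sum_range_succ', Nat.cast_zero, add_zero, add_comm]
    gcongr
    rw [le_div_iff₀' hε]
    exact mul_sum_range_rpow_add_succ_le hε.le hx M

lemma summable_rpow_add {ε x : ℝ} (hε : 0 < ε) (hx : 0 < x) :
    Summable fun s : ℕ => (x + s) ^ (-ε - 1) :=
  summable_of_sum_range_le (fun _ => by positivity) (sum_range_rpow_add_le hε hx)

lemma tsum_rpow_add_le {ε x : ℝ} (hε : 0 < ε) (hx : 1 ≤ x) :
    ∑' s : ℕ, (x + s) ^ (-ε - 1) ≤ (1 + 1 / ε) * x ^ (-ε) := by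
  have hx0 : 0 < x := one_pos.trans_le hx
  calc ∑' s : ℕ, (x + s) ^ (-ε - 1) ≤ x ^ (-ε - 1) + x ^ (-ε) / ε :=
        (summable_rpow_add hε hx0).tsum_le_of_sum_range_le (sum_range_rpow_add_le hε hx0)
    _ ≤ x ^ (-ε) + x ^ (-ε) / ε := by
        gcongr
        linarith
    _ = (1 + 1 / ε) * x ^ (-ε) := by ring

lemma rpow_rpow_neg_eq_inv_rpow {q : ℝ} (hq : 0 ≤ q) (a r : ℝ) : (q ^ a) ^ (-r) = q⁻¹ ^ (a * r) := by
  rw [← Real.rpow_mul hq, mul_neg, Real.rpow_neg hq, Real.inv_rpow hq]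

section GrowingSequence

variable {x : ℕ → ℝ} {N : ℕ}

lemma add_le_of_forall_add_one_le (hgrow : ∀ n ≥ N, x n + 1 ≤ x (n + 1)) (s : ℕ) :
    x N + s ≤ x (s + N) := by
  induction s with
  | zero => simp
  | succ s ih =>
    rw [Nat.cast_succ, ← add_assoc, Nat.succ_add]
    linarith [hgrow (s + N) (Nat.le_add_left N s)]

lemma rpow_nat_add_le_of_add_one_le (hgrow : ∀ n ≥ N, x n + 1 ≤ x (n + 1)) (hN : 0 < x N)
    {p : ℝ} (hp : p ≤ 0) (s : ℕ) : x (s + N) ^ p ≤ (x N + s) ^ p :=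
  Real.rpow_le_rpow_of_nonpos (by positivity) (add_le_of_forall_add_one_le hgrow s) hp

variable {ε : ℝ}

lemma summable_rpow_nat_add_of_add_one_le (hgrow : ∀ n ≥ N, x n + 1 ≤ x (n + 1)) (hε : 0 < ε)
    (hN : 0 < x N) : Summable fun s : ℕ => x (s + N) ^ (-ε - 1) :=
  (summable_rpow_add hε hN).of_nonneg_of_le
    (fun s => Real.rpow_nonneg ((by positivity : (0 : ℝ) ≤ x N + s).trans
      (add_le_of_forall_add_one_le hgrow s)) _)
    (rpow_nat_add_le_of_add_one_le hgrow hN (by linarith))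

lemma tsum_rpow_nat_add_le_of_add_one_le (hgrow : ∀ n ≥ N, x n + 1 ≤ x (n + 1)) (hε : 0 < ε)
    (hN : 1 ≤ x N) : ∑' s : ℕ, x (s + N) ^ (-ε - 1) ≤ (1 + 1 / ε) * x N ^ (-ε) := by
  have hN₀ : 0 < x N := one_pos.trans_le hN
  calc ∑' s : ℕ, x (s + N) ^ (-ε - 1) ≤ ∑' s : ℕ, (x N + s) ^ (-ε - 1) :=
        (summable_rpow_nat_add_of_add_one_le hgrow hε hN₀).tsum_le_tsum
          (rpow_nat_add_le_of_add_one_le hgrow hN₀ (by linarith)) (summable_rpow_add hε hN₀)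
    _ ≤ (1 + 1 / ε) * x N ^ (-ε) := tsum_rpow_add_le hε hN

end GrowingSequence

theorem tail_estimate_condition_two_general (ε : ℝ) (hε : 0 < ε) (c b : ℕ → ℕ)
    (hstep : ∃ N₀ : ℕ, ∀ n ≥ N₀,
      ((b n : ℝ) / (c n : ℝ)) ^ (1 / (1 + ε)) + 1 ≤
        ((b (n + 1) : ℝ) / (c (n + 1) : ℝ)) ^ (1 / (1 + ε))) :
    Summable (fun n => (c n : ℝ) / (b n : ℝ)) ∧
    ∃ C : ℝ, 0 < C ∧ ∃ N₀ : ℕ, ∀ N ≥ N₀,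
      (∑' n, (c n : ℝ) / (b n : ℝ)) - ∑ n ∈ Finset.range N, (c n : ℝ) / (b n : ℝ) <
        C * ((c N : ℝ) / (b N : ℝ)) ^ (ε / (1 + ε)) := by
  obtain ⟨N₀, hstep⟩ := hstep
  set x : ℕ → ℝ := fun n => ((b n : ℝ) / c n) ^ (1 / (1 + ε)) with hx
  have hq : ∀ n, (0 : ℝ) ≤ b n / c n := fun n => by positivity
  have hterm : ∀ n, (c n : ℝ) / b n = x n ^ (-ε - 1) := fun n => by
    rw [hx, ← neg_add', add_comm ε 1, rpow_rpow_neg_eq_inv_rpow (hq n), inv_div,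
      one_div_mul_cancel (by linarith), Real.rpow_one]
  have hpow : ∀ n, ((c n : ℝ) / b n) ^ (ε / (1 + ε)) = x n ^ (-ε) := fun n => by
    rw [hx, rpow_rpow_neg_eq_inv_rpow (hq n), inv_div, one_div_mul_eq_div]
  have hx1 : ∀ N ≥ N₀ + 1, 1 ≤ x N := by
    refine Nat.le_induction ?_ fun n hn h => ?_
    · linarith [hstep N₀ le_rfl, Real.rpow_nonneg (hq N₀) (1 / (1 + ε))]
    · linarith [hstep n (by omega)]
  have hgrow : ∀ N ≥ N₀ + 1, ∀ n ≥ N, x n + 1 ≤ x (n + 1) := fun N hN n hn => hstep n (by omega)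
  simp_rw [hpow, hterm]
  have hsum : Summable fun n => x n ^ (-ε - 1) := (summable_nat_add_iff (N₀ + 1)).1 <|
    summable_rpow_nat_add_of_add_one_le (hgrow _ le_rfl) hε (one_pos.trans_le (hx1 _ le_rfl))
  refine ⟨hsum, 2 + 1 / ε, by positivity, N₀ + 1, fun N hN => ?_⟩
  rw [← hsum.sum_add_tsum_nat_add N, add_sub_cancel_left]
  calc ∑' s, x (s + N) ^ (-ε - 1) ≤ (1 + 1 / ε) * x N ^ (-ε) :=
        tsum_rpow_nat_add_le_of_add_one_le (hgrow N hN) hε (hx1 N hN)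
    _ < (2 + 1 / ε) * x N ^ (-ε) := by
        have : 0 < x N ^ (-ε) := Real.rpow_pos_of_pos (one_pos.trans_le (hx1 N hN)) _
        gcongr
        norm_num

/-- Under the root-growth condition, `Σ c_n/b_n` converges and its tails are bounded by
`C·(c_{N+1}/b_{N+1})^{ε/(1+ε)}`. -/
theorem tail_estimate_condition_two (ε : ℝ) (hε : 0 < ε) (c b : ℕ → ℕ)
    (hc : ∀ n, 0 < c n) (hb : ∀ n, 0 < b n)
    (hstep : ∃ N₀ : ℕ, ∀ n ≥ N₀,
      ((b n : ℝ) / (c n : ℝ)) ^ (1 / (1 + ε)) + 1 ≤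
        ((b (n + 1) : ℝ) / (c (n + 1) : ℝ)) ^ (1 / (1 + ε))) :
    Summable (fun n => (c n : ℝ) / (b n : ℝ)) ∧
    ∃ C : ℝ, 0 < C ∧ ∃ N₀ : ℕ, ∀ N ≥ N₀,
      (∑' n, (c n : ℝ) / (b n : ℝ)) - ∑ n ∈ Finset.range N, (c n : ℝ) / (b n : ℝ) <
        C * ((c N : ℝ) / (b N : ℝ)) ^ (ε / (1 + ε)) :=
  tail_estimate_condition_two_general ε hε c b hstep
end

section
/- Let (b_n) be defined by b₁ = 2 and b_{n+1} = (b₁b₂⋯b_n)² for n ≥ 1, and let d(n) denote the number of divisors of n. Then the real numbers 1, Σ_{n=1}^∞ 1/b_n, and Σ_{n=1}^∞ d(n)/b_n are linearly independent over ℚ. -/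
/-!
Write `Q N = b₁ ⋯ b_N`, so that `Q (N + 1) = 2 ^ 3 ^ N` and `b (N + 1) = Q N ^ 2`; every `b n` with
`n ≤ N` divides `Q N`. Suppose `z₀ + ∑ aₙ / bₙ = 0` with `aₙ = z₁ + z₂ d(n) = O(2ⁿ)`. Then
`Q N (z₀ + ∑_{n ≤ N} aₙ / bₙ)` is an integer equal to `-Q N ∑_{n > N} aₙ / bₙ`, which is `O(2⁻ᴺ)`
because `b (N + 1) = Q N ^ 2`. So the tails vanish from some `N` on, hence `aₙ = 0` for all
large `n`. Taking `n = p` and `n = p²` for a large prime `p` gives `z₁ + 2 z₂ = z₁ + 3 z₂ = 0`.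
-/

open Finset Filter Topology

theorem exists_intCast_eq_mul_sum_div (a : ℕ → ℤ) {B : ℕ → ℕ} {q : ℕ} (s : Finset ℕ)
    (hdvd : ∀ k ∈ s, B k ∣ q) : ∃ I : ℤ, (I : ℝ) = q * ∑ k ∈ s, (a k : ℝ) / B k := by
  refine ⟨∑ k ∈ s, a k * (q / B k : ℕ), ?_⟩
  rw [Int.cast_sum, mul_sum]
  refine sum_congr rfl fun k hk => ?_
  rw [Int.cast_mul, Int.cast_natCast, Nat.cast_div_charZero (hdvd k hk)]
  ring

theorem eventually_eq_zero_of_intCast_add_tsum_div_eq_zero {a : ℕ → ℤ} {B Q : ℕ → ℕ}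
    {ε g : ℕ → ℝ} {z : ℤ} (hB : ∀ n, B n ≠ 0) (hQ : ∀ N, Q N ≠ 0)
    (hdvd : ∀ N, ∀ k < N, B k ∣ Q N) (hs : Summable fun n => (a n : ℝ) / B n)
    (hg : Summable g) (hε : Tendsto ε atTop (𝓝 0))
    (hbound : ∀ᶠ N in atTop, ∀ n, ‖(Q N : ℝ) * ((a (n + N) : ℝ) / B (n + N))‖ ≤ ε N * g n)
    (hsum : z + ∑' n, (a n : ℝ) / B n = 0) :
    ∀ᶠ n in atTop, a n = 0 := by
  set t : ℕ → ℝ := fun N => ∑' n, (a (n + N) : ℝ) / B (n + N)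
  have htail : ∀ᶠ N in atTop, t N = 0 := by
    have hsmall : Tendsto (fun N => ε N * ∑' n, g n) atTop (𝓝 0) := by
      simpa using hε.mul_const (∑' n, g n)
    filter_upwards [hbound, hsmall.eventually_lt_const one_pos] with N hN hlt
    obtain ⟨I, hI⟩ :=
      exists_intCast_eq_mul_sum_div a (range N) fun k hk => hdvd N k (mem_range.1 hk)
    have hI' : ((z * Q N + I : ℤ) : ℝ) = -(Q N * t N) := by
      rw [← hs.sum_add_tsum_nat_add N] at hsum
      push_cast
      linear_combination hI + (Q N : ℝ) * hsum
    have hI_lt : |((z * Q N + I : ℤ) : ℝ)| < 1 := by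
      rw [hI', abs_neg, ← Real.norm_eq_abs, ← tsum_mul_left]
      exact (tsum_of_norm_bounded (hg.hasSum.mul_left (ε N)) hN).trans_lt hlt
    rw [← Int.cast_abs, ← Int.cast_one, Int.cast_lt, Int.abs_lt_one_iff] at hI_lt
    rw [hI_lt, Int.cast_zero, zero_eq_neg, mul_eq_zero] at hI'
    exact hI'.resolve_left (Nat.cast_ne_zero.2 (hQ N))
  filter_upwards [htail, (tendsto_add_atTop_nat 1).eventually htail] with N hN hN1
  have hshift := ((summable_nat_add_iff N).2 hs).tsum_eq_zero_add
  simp only [t, zero_add] at hN hN1 hshift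
  simp_rw [add_assoc, Nat.add_comm 1 N] at hshift
  rw [hN, hN1, add_zero, eq_comm, div_eq_zero_iff] at hshift
  exact_mod_cast hshift.resolve_right (Nat.cast_ne_zero.2 (hB N))

theorem card_divisors_prime_pow {p : ℕ} (hp : p.Prime) (k : ℕ) : #(p ^ k).divisors = k + 1 := by
  simp [Nat.divisors_prime_pow hp]

theorem eq_zero_of_eventually_add_mul_card_divisors_eq_zero {z₁ z₂ : ℤ}
    (h : ∀ᶠ n : ℕ in atTop, z₁ + z₂ * #n.divisors = 0) : z₁ = 0 ∧ z₂ = 0 := by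
  obtain ⟨N, hN⟩ := h.exists_forall_of_atTop
  obtain ⟨p, hNp, hp⟩ := Nat.exists_infinite_primes N
  have h₁ := hN (p ^ 1) (by simpa using hNp)
  have h₂ := hN (p ^ 2) (hNp.trans (Nat.le_self_pow two_ne_zero p))
  rw [card_divisors_prime_pow hp] at h₁ h₂
  push_cast at h₁ h₂
  omega

theorem card_divisors_succ_le_two_pow (n : ℕ) : #(n + 1).divisors ≤ 2 ^ n :=
  (Nat.card_divisors_le_self _).trans Nat.lt_two_pow_self

theorem abs_add_mul_card_divisors_le (z₁ z₂ : ℤ) (n : ℕ) :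
    |z₁ + z₂ * #(n + 1).divisors| ≤ (|z₁| + |z₂|) * 2 ^ n := by
  have hd : (#(n + 1).divisors : ℤ) ≤ 2 ^ n := by exact_mod_cast card_divisors_succ_le_two_pow n
  calc |z₁ + z₂ * #(n + 1).divisors| ≤ |z₁| + |z₂| * #(n + 1).divisors := by
        simpa [abs_mul] using abs_add_le z₁ (z₂ * #(n + 1).divisors)
    _ ≤ |z₁| * 2 ^ n + |z₂| * 2 ^ n := by
        gcongr
        exact le_mul_of_one_le_right (abs_nonneg _) (one_le_pow₀ one_le_two)
    _ = (|z₁| + |z₂|) * 2 ^ n := by ring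

section

variable {b : ℕ → ℕ}

theorem prod_Icc_one_succ_eq_two_pow (hb1 : b 1 = 2)
    (hrec : ∀ n ≥ 1, b (n + 1) = (∏ k ∈ Icc 1 n, b k) ^ 2) (m : ℕ) :
    ∏ k ∈ Icc 1 (m + 1), b k = 2 ^ 3 ^ m := by
  induction m with
  | zero => simp [hb1]
  | succ m ih =>
    rw [prod_Icc_succ_top (by omega), hrec (m + 1) (by omega), ih, ← pow_mul, ← pow_add]
    ring_nf

theorem apply_add_two_eq_two_pow (hb1 : b 1 = 2)
    (hrec : ∀ n ≥ 1, b (n + 1) = (∏ k ∈ Icc 1 n, b k) ^ 2) (m : ℕ) :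
    b (m + 2) = 2 ^ (2 * 3 ^ m) := by
  rw [hrec (m + 1) (by omega), prod_Icc_one_succ_eq_two_pow hb1 hrec, ← pow_mul, mul_comm]

theorem apply_succ_pos (hb1 : b 1 = 2)
    (hrec : ∀ n ≥ 1, b (n + 1) = (∏ k ∈ Icc 1 n, b k) ^ 2) (n : ℕ) : 0 < b (n + 1) := by
  cases n with
  | zero => simp [hb1]
  | succ m => simp [apply_add_two_eq_two_pow hb1 hrec]

theorem prod_Icc_ne_zero (hb1 : b 1 = 2)
    (hrec : ∀ n ≥ 1, b (n + 1) = (∏ k ∈ Icc 1 n, b k) ^ 2) (N : ℕ) : ∏ k ∈ Icc 1 N, b k ≠ 0 :=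
  prod_ne_zero_iff.2 fun k hk => by
    simpa [Nat.sub_add_cancel (mem_Icc.1 hk).1] using (apply_succ_pos hb1 hrec (k - 1)).ne'

theorem prod_Icc_mul_two_pow_div_le (hb1 : b 1 = 2)
    (hrec : ∀ n ≥ 1, b (n + 1) = (∏ k ∈ Icc 1 n, b k) ^ 2) {N : ℕ} (hN : 1 ≤ N) (n : ℕ) :
    ((∏ k ∈ Icc 1 N, b k : ℕ) : ℝ) * 2 ^ (n + N) / b (n + N + 1) ≤
      2 * (1 / 2) ^ N * (1 / 2) ^ n := by
  obtain ⟨M, rfl⟩ : ∃ M, N = M + 1 := ⟨N - 1, by omega⟩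
  have hexp : 3 ^ M + (n + (M + 1)) + (n + M) ≤ 2 * 3 ^ (n + M) := by
    have hM : 1 + M * 2 ≤ 3 ^ M := by
      exact_mod_cast one_add_mul_le_pow (by norm_num : (-2 : ℤ) ≤ 2) M
    have hn : n < 3 ^ n := Nat.lt_pow_self (by norm_num)
    rw [pow_add]
    nlinarith
  have key : (2 : ℝ) ^ 3 ^ M * 2 ^ (n + (M + 1)) * 2 ^ (n + M) ≤ 2 ^ (2 * 3 ^ (n + M)) := by
    rw [← pow_add, ← pow_add]
    exact pow_le_pow_right₀ one_le_two hexp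
  rw [prod_Icc_one_succ_eq_two_pow hb1 hrec, show n + (M + 1) + 1 = n + M + 2 by ring,
    apply_add_two_eq_two_pow hb1 hrec, div_le_iff₀ (by positivity)]
  push_cast
  calc (2 : ℝ) ^ 3 ^ M * 2 ^ (n + (M + 1))
      = 2 ^ 3 ^ M * 2 ^ (n + (M + 1)) * 2 ^ (n + M) * (1 / 2) ^ (n + M) := by
        rw [mul_assoc _ ((2 : ℝ) ^ (n + M)), ← mul_pow]; norm_num
    _ ≤ 2 ^ (2 * 3 ^ (n + M)) * (1 / 2) ^ (n + M) := by gcongr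
    _ = 2 * (1 / 2) ^ (M + 1) * (1 / 2) ^ n * 2 ^ (2 * 3 ^ (n + M)) := by ring

theorem summable_two_pow_div (hb1 : b 1 = 2)
    (hrec : ∀ n ≥ 1, b (n + 1) = (∏ k ∈ Icc 1 n, b k) ^ 2) :
    Summable fun n => (2 : ℝ) ^ n / b (n + 1) := by
  refine (summable_nat_add_iff 1).1 <| (summable_geometric_two.div_const 2).of_nonneg_of_le
    (fun n => by positivity) fun n => ?_
  have h := prod_Icc_mul_two_pow_div_le hb1 hrec le_rfl n
  rw [Icc_self, prod_singleton, hb1, Nat.cast_ofNat, mul_div_assoc] at h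
  linarith

variable {x : ℕ → ℝ} {C : ℝ}

theorem summable_div_of_abs_le (hb1 : b 1 = 2)
    (hrec : ∀ n ≥ 1, b (n + 1) = (∏ k ∈ Icc 1 n, b k) ^ 2) (hx : ∀ n, |x n| ≤ C * 2 ^ n) :
    Summable fun n => x n / b (n + 1) := by
  refine ((summable_two_pow_div hb1 hrec).mul_left C).of_norm_bounded fun n => ?_
  rw [Real.norm_eq_abs, abs_div, Nat.abs_cast, mul_div_assoc']
  exact div_le_div_of_nonneg_right (hx n) (Nat.cast_nonneg _)

theorem norm_prod_Icc_mul_div_le (hb1 : b 1 = 2)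
    (hrec : ∀ n ≥ 1, b (n + 1) = (∏ k ∈ Icc 1 n, b k) ^ 2) (hx : ∀ n, |x n| ≤ C * 2 ^ n)
    {N : ℕ} (hN : 1 ≤ N) (n : ℕ) :
    ‖((∏ k ∈ Icc 1 N, b k : ℕ) : ℝ) * (x (n + N) / b (n + N + 1))‖ ≤
      2 * C * (1 / 2) ^ N * (1 / 2) ^ n := by
  have hC : 0 ≤ C := by simpa using (abs_nonneg _).trans (hx 0)
  calc ‖((∏ k ∈ Icc 1 N, b k : ℕ) : ℝ) * (x (n + N) / b (n + N + 1))‖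
      = ((∏ k ∈ Icc 1 N, b k : ℕ) : ℝ) * |x (n + N)| / b (n + N + 1) := by
        rw [Real.norm_eq_abs, abs_mul, abs_div, Nat.abs_cast, Nat.abs_cast, mul_div_assoc]
    _ ≤ ((∏ k ∈ Icc 1 N, b k : ℕ) : ℝ) * (C * 2 ^ (n + N)) / b (n + N + 1) := by
        gcongr
        exact hx _
    _ = C * (((∏ k ∈ Icc 1 N, b k : ℕ) : ℝ) * 2 ^ (n + N) / b (n + N + 1)) := by ring
    _ ≤ C * (2 * (1 / 2) ^ N * (1 / 2) ^ n) := by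
        gcongr
        exact prod_Icc_mul_two_pow_div_le hb1 hrec hN n
    _ = 2 * C * (1 / 2) ^ N * (1 / 2) ^ n := by ring

end

/-- For `b₁ = 2`, `b_{n+1} = (b₁⋯b_n)²`, the numbers `1`, `Σ 1/b_n` and `Σ d(n)/b_n`
are linearly independent over ℚ. -/
theorem one_sum_divisorSum_linearIndependent (b : ℕ → ℕ) (hb1 : b 1 = 2)
    (hrec : ∀ n ≥ 1, b (n + 1) = (∏ k ∈ Finset.Icc 1 n, b k) ^ 2) :
    ∀ z₀ z₁ z₂ : ℤ,
      (z₀ : ℝ) + (z₁ : ℝ) * (∑' n : ℕ, 1 / (b (n + 1) : ℝ)) +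
        (z₂ : ℝ) * (∑' n : ℕ, ((Nat.divisors (n + 1)).card : ℝ) / (b (n + 1) : ℝ)) = 0 →
      z₀ = 0 ∧ z₁ = 0 ∧ z₂ = 0 := by
  intro z₀ z₁ z₂ hyp
  set a : ℕ → ℤ := fun n => z₁ + z₂ * #(n + 1).divisors
  have ha_le : ∀ n, |(a n : ℝ)| ≤ (|z₁| + |z₂| : ℤ) * 2 ^ n := fun n => by
    exact_mod_cast abs_add_mul_card_divisors_le z₁ z₂ n
  have hs₁ : Summable fun n => 1 / (b (n + 1) : ℝ) :=
    summable_div_of_abs_le (C := 1) hb1 hrec fun n => by simpa using one_le_pow₀ one_le_two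
  have hs₂ : Summable fun n => (#(n + 1).divisors : ℝ) / b (n + 1) :=
    summable_div_of_abs_le (C := 1) hb1 hrec fun n => by
      simpa using (Nat.cast_le (α := ℝ)).2 (card_divisors_succ_le_two_pow n)
  have hsum : (z₀ : ℝ) + ∑' n, (a n : ℝ) / b (n + 1) = 0 := by
    rw [← hyp, add_assoc, ← tsum_mul_left, ← tsum_mul_left,
      ← (hs₁.mul_left _).tsum_add (hs₂.mul_left _)]
    congr 2 with n
    simp only [a]; push_cast; ring
  have ha₀ : ∀ᶠ n in atTop, a n = 0 :=
    eventually_eq_zero_of_intCast_add_tsum_div_eq_zero (fun n => (apply_succ_pos hb1 hrec n).ne')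
      (prod_Icc_ne_zero hb1 hrec) (fun N k hk => dvd_prod_of_mem b (mem_Icc.2 ⟨by omega, by omega⟩))
      (summable_div_of_abs_le hb1 hrec ha_le) summable_geometric_two
      (by simpa using (tendsto_pow_atTop_nhds_zero_of_lt_one (r := (1 / 2 : ℝ)) (by norm_num)
        (by norm_num)).const_mul (2 * (|z₁| + |z₂| : ℤ) : ℝ))
      ((eventually_ge_atTop 1).mono fun N hN => norm_prod_Icc_mul_div_le hb1 hrec ha_le hN) hsum
  have hdiv₀ : ∀ᶠ m : ℕ in atTop, z₁ + z₂ * #m.divisors = 0 := by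
    filter_upwards [(tendsto_sub_atTop_nat 1).eventually ha₀, eventually_ge_atTop 1] with m hm hm1
    simpa only [a, Nat.sub_add_cancel hm1] using hm
  obtain ⟨rfl, rfl⟩ := eq_zero_of_eventually_add_mul_card_divisors_eq_zero hdiv₀
  simpa using hyp
end

section
/- Let (b_n) satisfy b₁ = 2 and b_{n+1} = (b₁b₂⋯b_n)² for n ≥ 1, and let d(n) be the number-of-divisors function. Then for any integers z₁, z₂, the quantity (b₁b₂⋯b_N)·(z₁·Σ_{n=N+1}^∞ 1/b_n + z₂·Σ_{n=N+1}^∞ d(n)/b_n) tends to 0 as N → ∞. -/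
/-!
Write `P_N = b₁⋯b_N`. Every `b_k` is at least `2`, so `P_{N+n} ≥ 2ⁿ P_N`, and the recursion gives
`b_{N+1+n} ≥ P_{N+n}² ≥ 4ⁿ P_N²`. Since `1 ≤ d(m) ≤ m ≤ (N + 1) 2ⁿ` for `m = N + 1 + n`, both tails are
at most `2 (N + 1) / P_N²`, so the scaled quantity is `O((N + 1) / P_N) = O((N + 1) / 2^N)`.
-/

open Finset Filter

section Recursion

variable {b : ℕ → ℕ}

theorem one_le_prod_Icc_of_rec (hb1 : b 1 = 2)
    (hrec : ∀ n ≥ 1, b (n + 1) = (∏ k ∈ Icc 1 n, b k) ^ 2) :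
    ∀ m, 1 ≤ ∏ k ∈ Icc 1 m, b k
  | 0 => by simp
  | m + 1 => by
    have hbm : 1 ≤ b (m + 1) := by
      rcases Nat.eq_zero_or_pos m with rfl | hm
      · simp [hb1]
      · rw [hrec m hm]
        exact Nat.one_le_pow _ _ (one_le_prod_Icc_of_rec hb1 hrec m)
    rw [prod_Icc_succ_top (by omega)]
    exact Nat.mul_le_mul (one_le_prod_Icc_of_rec hb1 hrec m) hbm

theorem two_le_succ_of_rec (hb1 : b 1 = 2)
    (hrec : ∀ n ≥ 1, b (n + 1) = (∏ k ∈ Icc 1 n, b k) ^ 2) :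
    ∀ m, 2 ≤ b (m + 1)
  | 0 => hb1.ge
  | m + 1 => by
    rw [hrec (m + 1) (by omega), prod_Icc_succ_top (by omega)]
    have h := Nat.mul_le_mul (one_le_prod_Icc_of_rec hb1 hrec m) (two_le_succ_of_rec hb1 hrec m)
    exact (h.trans' (by norm_num)).trans (Nat.le_self_pow two_ne_zero _)

theorem sq_prod_Icc_le_succ_of_rec (hb1 : b 1 = 2)
    (hrec : ∀ n ≥ 1, b (n + 1) = (∏ k ∈ Icc 1 n, b k) ^ 2) (m : ℕ) :
    (∏ k ∈ Icc 1 m, b k) ^ 2 ≤ b (m + 1) := by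
  rcases Nat.eq_zero_or_pos m with rfl | hm
  · simp [hb1]
  · exact (hrec m hm).ge

theorem prod_Icc_mul_two_pow_le (hb : ∀ m, 2 ≤ b (m + 1)) (N : ℕ) :
    ∀ n, (∏ k ∈ Icc 1 N, b k) * 2 ^ n ≤ ∏ k ∈ Icc 1 (N + n), b k
  | 0 => by simp
  | n + 1 => by
    rw [← add_assoc, prod_Icc_succ_top (by omega), pow_succ, ← mul_assoc]
    exact Nat.mul_le_mul (prod_Icc_mul_two_pow_le hb N n) (hb (N + n))

end Recursion

theorem tsum_div_le_of_le_two_pow {a B : ℕ → ℝ} {c K : ℝ} (hc : 0 < c)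
    (ha₀ : ∀ n, 0 ≤ a n) (ha : ∀ n, a n ≤ K * 2 ^ n) (hB : ∀ n, c ^ 2 * 4 ^ n ≤ B n) :
    ∑' n, a n / B n ≤ 2 * K / c ^ 2 := by
  have hterm : ∀ n, a n / B n ≤ K / c ^ 2 * (1 / 2) ^ n := fun n => calc
    a n / B n ≤ K * 2 ^ n / (c ^ 2 * 4 ^ n) :=
      div_le_div₀ ((ha₀ n).trans (ha n)) (ha n) (by positivity) (hB n)
    _ = K / c ^ 2 * (1 / 2) ^ n := by
      rw [show (4 : ℝ) ^ n = 2 ^ n * 2 ^ n by rw [← mul_pow]; norm_num, one_div_pow]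
      field_simp
  have hgeom := hasSum_geometric_two.mul_left (K / c ^ 2)
  have hsum : Summable fun n => a n / B n :=
    .of_nonneg_of_le (fun n => div_nonneg (ha₀ n) ((by positivity : 0 ≤ c ^ 2 * 4 ^ n).trans (hB n)))
      hterm hgeom.summable
  calc ∑' n, a n / B n ≤ K / c ^ 2 * 2 :=
        (hsum.tsum_le_tsum hterm hgeom.summable).trans_eq hgeom.tsum_eq
    _ = 2 * K / c ^ 2 := by ring

theorem abs_mul_linear_comb_le {c T₁ T₂ S : ℝ} (hc : 0 < c) (z₁ z₂ : ℝ)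
    (hT₁ : 0 ≤ T₁) (hT₁S : T₁ ≤ S / c ^ 2) (hT₂ : 0 ≤ T₂) (hT₂S : T₂ ≤ S / c ^ 2) :
    |c * (z₁ * T₁ + z₂ * T₂)| ≤ (|z₁| + |z₂|) * S / c := calc
  |c * (z₁ * T₁ + z₂ * T₂)| ≤ c * (|z₁| * T₁ + |z₂| * T₂) := by
    rw [abs_mul, abs_of_pos hc]
    gcongr
    exact (abs_add_le _ _).trans_eq (by rw [abs_mul, abs_mul, abs_of_nonneg hT₁, abs_of_nonneg hT₂])
  _ ≤ c * (|z₁| * (S / c ^ 2) + |z₂| * (S / c ^ 2)) := by gcongr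
  _ = (|z₁| + |z₂|) * S / c := by field_simp

theorem abs_scaled_tails_le {b : ℕ → ℕ} (hb1 : b 1 = 2)
    (hrec : ∀ n ≥ 1, b (n + 1) = (∏ k ∈ Icc 1 n, b k) ^ 2) (z₁ z₂ : ℤ) (N : ℕ) :
    |(∏ k ∈ Icc 1 N, (b k : ℝ)) *
        ((z₁ : ℝ) * (∑' n : ℕ, 1 / (b (N + 1 + n) : ℝ)) +
         (z₂ : ℝ) * (∑' n : ℕ, ((Nat.divisors (N + 1 + n)).card : ℝ) / (b (N + 1 + n) : ℝ)))|
      ≤ (|(z₁ : ℝ)| + |(z₂ : ℝ)|) * (2 * (N + 1)) / 2 ^ N := by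
  set c : ℝ := ∏ k ∈ Icc 1 N, (b k : ℝ)
  have hcast : c = ((∏ k ∈ Icc 1 N, b k : ℕ) : ℝ) := (Nat.cast_prod _ _).symm
  have hb2 := two_le_succ_of_rec hb1 hrec
  have hc : (2 : ℝ) ^ N ≤ c := by
    have := prod_Icc_mul_two_pow_le hb2 0 N
    simp only [Icc_eq_empty_of_lt zero_lt_one, prod_empty, one_mul, zero_add] at this
    rw [hcast]
    exact_mod_cast this
  have hc₀ : 0 < c := lt_of_lt_of_le (by positivity) hc
  have hB : ∀ n, c ^ 2 * 4 ^ n ≤ b (N + 1 + n) := fun n => by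
    have := (Nat.pow_le_pow_left (prod_Icc_mul_two_pow_le hb2 N n) 2).trans
      (sq_prod_Icc_le_succ_of_rec hb1 hrec (N + n))
    rw [mul_pow, ← pow_mul, mul_comm n, pow_mul, add_right_comm] at this
    rw [hcast]
    exact_mod_cast this
  have hm : ∀ n, ((N + 1 + n : ℕ) : ℝ) ≤ (N + 1) * 2 ^ n := fun n => by
    have : (n : ℝ) + 1 ≤ 2 ^ n := by exact_mod_cast Nat.lt_two_pow_self
    push_cast
    nlinarith [N.cast_nonneg (α := ℝ), n.cast_nonneg (α := ℝ)]
  have hT₁ : ∑' n : ℕ, 1 / (b (N + 1 + n) : ℝ) ≤ 2 * (N + 1) / c ^ 2 :=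
    tsum_div_le_of_le_two_pow hc₀ (fun _ => zero_le_one)
      (fun n => le_trans (by exact_mod_cast (by omega : 1 ≤ N + 1 + n)) (hm n)) hB
  have hT₂ : ∑' n : ℕ, ((Nat.divisors (N + 1 + n)).card : ℝ) / (b (N + 1 + n) : ℝ)
      ≤ 2 * (N + 1) / c ^ 2 :=
    tsum_div_le_of_le_two_pow hc₀ (fun _ => Nat.cast_nonneg _)
      (fun n => le_trans (by exact_mod_cast Nat.card_divisors_le_self _) (hm n)) hB
  refine (abs_mul_linear_comb_le hc₀ _ _ (tsum_nonneg fun _ => by positivity) hT₁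
    (tsum_nonneg fun _ => by positivity) hT₂).trans ?_
  gcongr

/-- The scaled tails `(b₁⋯b_N)·(z₁·Σ_{n>N} 1/b_n + z₂·Σ_{n>N} d(n)/b_n)` tend to `0`. -/
theorem scaled_tails_tendsto_zero (b : ℕ → ℕ) (hb1 : b 1 = 2)
    (hrec : ∀ n ≥ 1, b (n + 1) = (∏ k ∈ Finset.Icc 1 n, b k) ^ 2) (z₁ z₂ : ℤ) :
    Filter.Tendsto (fun N : ℕ =>
      (∏ k ∈ Finset.Icc 1 N, (b k : ℝ)) *
        ((z₁ : ℝ) * (∑' n : ℕ, 1 / (b (N + 1 + n) : ℝ)) +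
         (z₂ : ℝ) * (∑' n : ℕ, ((Nat.divisors (N + 1 + n)).card : ℝ) / (b (N + 1 + n) : ℝ))))
      Filter.atTop (nhds 0) := by
  refine squeeze_zero_norm (fun N => (Real.norm_eq_abs _).trans_le (abs_scaled_tails_le hb1 hrec z₁ z₂ N)) ?_
  have hlin : Tendsto (fun N : ℕ => ((N + 1 : ℕ) : ℝ) ^ 1 / 2 ^ (N + 1)) atTop (nhds 0) :=
    (tendsto_add_atTop_iff_nat 1).mpr (tendsto_pow_const_div_const_pow_of_one_lt 1 one_lt_two)
  convert hlin.const_mul (4 * (|(z₁ : ℝ)| + |(z₂ : ℝ)|)) using 2 with N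
  · push_cast; rw [pow_succ]; field_simp; ring
  · simp
end

section
/- Let δ > 1/3 and let Q = (b_n) be a sequence of positive integers with b_n ≥ 2. Suppose there are infinitely many N such that σ(N+1)·(b₁⋯b_N)^δ ≤ b_{N+1}, φ(N+1)·(b₁⋯b_N)^δ ≤ b_{N+1}, and d(N+1)·(b₁⋯b_N)^δ ≤ b_{N+1}, where σ is the sum-of-divisors function, φ the Euler totient, and d the number-of-divisors function. Then setting β₁ = Σ_{n≥1} σ(n)/(b₁⋯b_n), β₂ = Σ_{n≥1} φ(n)/(b₁⋯b_n), β₃ = Σ_{n≥1} d(n)/(b₁⋯b_n), there exist δ' > 1/3 and infinitely many N such that |β_i - p_{i,N}/(b₁⋯b_N)| < 1/(b₁⋯b_N)^{1+δ'} for all i = 1,2,3, where p_{i,N} is the integer numerator of the N-th partial sum over the common denominator b₁⋯b_N. -/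
/-!
The tail of `∑ a(n) / (b₁⋯bₙ)` after `N` terms is at most a constant times `(N+1)^k / (b₁⋯b_{N+1})`
when `a(m) ≤ m^k` and every `bᵢ ≥ 2`, because each further factor `bᵢ` at least halves the terms.
When `b_{N+1} ≥ (b₁⋯b_N)^δ` the denominator is at least `(b₁⋯b_N)^(1+δ)`, and the polynomial factor
`(N+1)^k` is eventually absorbed by `(b₁⋯b_N)^(δ-δ') ≥ 2^((δ-δ')N)` for any `δ' < δ`. The
coefficients `σ(m) ≤ m²`, `φ(m) ≤ m` and `d(m) ≤ m` all have polynomial growth.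
-/

open Finset Filter Topology

lemma summable_add_one_pow_div_two_pow (k : ℕ) :
    Summable (fun j : ℕ => ((j : ℝ) + 1) ^ k / 2 ^ j) := by
  have h := (summable_nat_add_iff 1).2 <|
    summable_pow_mul_geometric_of_norm_lt_one k (r := (1 / 2 : ℝ)) (by norm_num)
  refine (h.mul_left 2).congr fun j => ?_
  rw [Nat.cast_succ, one_div, inv_pow, pow_succ]
  field_simp

lemma div_lt_one_div_rpow_of_rpow_le {P B T δ δ' : ℝ} (hP : 0 < P) (hB : P ^ δ ≤ B)
    (hT : T < P ^ (δ - δ')) (hT0 : 0 ≤ T) : T / (P * B) < 1 / P ^ (1 + δ') := by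
  have hsplit : P ^ (1 + δ) = P ^ (1 + δ') * P ^ (δ - δ') := by
    rw [← Real.rpow_add hP]; ring_nf
  calc T / (P * B) ≤ T / P ^ (1 + δ) := by
        rw [Real.rpow_add hP, Real.rpow_one]
        gcongr
    _ < P ^ (δ - δ') / P ^ (1 + δ) := by gcongr
    _ = 1 / P ^ (1 + δ') := by
        rw [hsplit]
        field_simp

lemma eventually_mul_add_one_pow_lt_pow (C : ℝ) (k : ℕ) {c : ℝ} (hc : 1 < c) :
    ∀ᶠ N : ℕ in atTop, C * ((N : ℝ) + 1) ^ k < c ^ N := by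
  have hlim : Tendsto (fun N : ℕ => C * c * (((N : ℝ) + 1) ^ k / c ^ (N + 1))) atTop (𝓝 0) := by
    have := (tendsto_pow_const_div_const_pow_of_one_lt k hc).comp (tendsto_add_atTop_nat 1)
    simpa using this.const_mul (C * c)
  filter_upwards [hlim.eventually_lt_const one_pos] with N hN
  have hcN : 0 < c ^ N := pow_pos (zero_lt_one.trans hc) N
  calc C * ((N : ℝ) + 1) ^ k = C * c * (((N : ℝ) + 1) ^ k / c ^ (N + 1)) * c ^ N := by
        field_simp
        ring
    _ < 1 * c ^ N := by gcongr
    _ = c ^ N := one_mul _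

section PartialProducts

variable {b : ℕ → ℝ} (hb : ∀ n ≥ 1, 2 ≤ b n)
include hb

lemma two_pow_le_prod_Icc (n : ℕ) : (2 : ℝ) ^ n ≤ ∏ i ∈ Icc 1 n, b i := by
  simpa using prod_le_prod (fun _ _ => zero_le_two) fun i hi => hb i (mem_Icc.1 hi).1

lemma prod_Icc_pos (n : ℕ) : 0 < ∏ i ∈ Icc 1 n, b i :=
  (pow_pos two_pos n).trans_le (two_pow_le_prod_Icc hb n)

lemma prod_Icc_mul_two_pow_le_s15 (M j : ℕ) :
    (∏ i ∈ Icc 1 M, b i) * 2 ^ j ≤ ∏ i ∈ Icc 1 (M + j), b i := by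
  induction j with
  | zero => simp
  | succ j ih =>
    rw [← add_assoc, prod_Icc_succ_top (by omega), pow_succ, ← mul_assoc]
    exact mul_le_mul ih (hb _ (by omega)) zero_le_two (prod_Icc_pos hb _).le

end PartialProducts

section Tails

variable {b : ℕ → ℝ} (hb : ∀ n ≥ 1, 2 ≤ b n) {a : ℕ → ℝ} {k : ℕ} (ha : ∀ m, a m ≤ (m : ℝ) ^ k)
include hb ha

lemma div_prod_Icc_le (N j : ℕ) :
    a (j + N + 1) / ∏ i ∈ Icc 1 (j + N + 1), b i ≤
      ((N : ℝ) + 1) ^ k / (∏ i ∈ Icc 1 (N + 1), b i) * (((j : ℝ) + 1) ^ k / 2 ^ j) := by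
  have hnum : a (j + N + 1) ≤ ((N : ℝ) + 1) ^ k * ((j : ℝ) + 1) ^ k := by
    rw [← mul_pow]
    refine (ha _).trans (pow_le_pow_left₀ (by positivity) ?_ k)
    push_cast
    nlinarith [(j.cast_nonneg : (0 : ℝ) ≤ j), (N.cast_nonneg : (0 : ℝ) ≤ N)]
  have hden : (∏ i ∈ Icc 1 (N + 1), b i) * 2 ^ j ≤ ∏ i ∈ Icc 1 (j + N + 1), b i := by
    rw [show j + N + 1 = N + 1 + j by omega]
    exact prod_Icc_mul_two_pow_le_s15 hb (N + 1) j
  calc a (j + N + 1) / ∏ i ∈ Icc 1 (j + N + 1), b i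
      ≤ ((N : ℝ) + 1) ^ k * ((j : ℝ) + 1) ^ k / ((∏ i ∈ Icc 1 (N + 1), b i) * 2 ^ j) :=
        div_le_div₀ (by positivity) hnum (by have := prod_Icc_pos hb (N + 1); positivity) hden
    _ = _ := by ring

lemma summable_div_prod_Icc (ha0 : ∀ m, 0 ≤ a m) :
    Summable (fun n => a (n + 1) / ∏ i ∈ Icc 1 (n + 1), b i) :=
  ((summable_add_one_pow_div_two_pow k).mul_left _).of_nonneg_of_le
    (fun n => div_nonneg (ha0 _) (prod_Icc_pos hb _).le)
    (fun n => by simpa using div_prod_Icc_le hb ha 0 n)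

lemma abs_tsum_sub_sum_range_le (ha0 : ∀ m, 0 ≤ a m) (N : ℕ) :
    |∑' n, a (n + 1) / ∏ i ∈ Icc 1 (n + 1), b i -
        ∑ n ∈ range N, a (n + 1) / ∏ i ∈ Icc 1 (n + 1), b i| ≤
      ((N : ℝ) + 1) ^ k / (∏ i ∈ Icc 1 (N + 1), b i) * ∑' j : ℕ, ((j : ℝ) + 1) ^ k / 2 ^ j := by
  have hs := summable_div_prod_Icc hb ha ha0
  rw [← hs.sum_add_tsum_nat_add N, add_sub_cancel_left,
    abs_of_nonneg (tsum_nonneg fun n => div_nonneg (ha0 _) (prod_Icc_pos hb _).le),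
    ← tsum_mul_left]
  exact Summable.tsum_le_tsum (div_prod_Icc_le hb ha N)
    ((summable_nat_add_iff (f := fun n => a (n + 1) / ∏ i ∈ Icc 1 (n + 1), b i) N).2 hs)
    ((summable_add_one_pow_div_two_pow k).mul_left _)

lemma eventually_abs_tsum_sub_sum_range_lt (ha0 : ∀ m, 0 ≤ a m) {δ δ' : ℝ} (hδ' : δ' < δ) :
    ∀ᶠ N : ℕ in atTop, (∏ i ∈ Icc 1 N, b i) ^ δ ≤ b (N + 1) →
      |∑' n, a (n + 1) / ∏ i ∈ Icc 1 (n + 1), b i -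
          ∑ n ∈ range N, a (n + 1) / ∏ i ∈ Icc 1 (n + 1), b i| <
        1 / (∏ i ∈ Icc 1 N, b i) ^ (1 + δ') := by
  set C := ∑' j : ℕ, ((j : ℝ) + 1) ^ k / 2 ^ j
  have hε : 0 < δ - δ' := sub_pos.2 hδ'
  have hc : 1 < (2 : ℝ) ^ (δ - δ') := Real.one_lt_rpow one_lt_two hε
  filter_upwards [eventually_mul_add_one_pow_lt_pow C k hc] with N hN hbN
  have hP := prod_Icc_pos hb N
  have hpoly : C * ((N : ℝ) + 1) ^ k < (∏ i ∈ Icc 1 N, b i) ^ (δ - δ') := by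
    refine hN.trans_le ?_
    rw [← Real.rpow_natCast, ← Real.rpow_mul zero_le_two, mul_comm, Real.rpow_mul zero_le_two,
      Real.rpow_natCast]
    exact Real.rpow_le_rpow (by positivity) (two_pow_le_prod_Icc hb N) hε.le
  have hC : 0 ≤ C := tsum_nonneg fun j => by positivity
  calc _ ≤ _ := abs_tsum_sub_sum_range_le hb ha ha0 N
    _ = C * ((N : ℝ) + 1) ^ k / ((∏ i ∈ Icc 1 N, b i) * b (N + 1)) := by
        rw [prod_Icc_succ_top (by omega)]
        ring
    _ < _ := div_lt_one_div_rpow_of_rpow_le hP hbN hpoly (by positivity)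

end Tails

lemma Nat.sum_divisors_le_sq (m : ℕ) : ∑ d ∈ m.divisors, d ≤ m ^ 2 := by
  simpa [ArithmeticFunction.sigma_one_apply] using ArithmeticFunction.sigma_le_pow_succ 1 m

/-- Simultaneous-approximation step for Theorem 1.2: the partial sums of the three series
`Σ σ(n)/(b₁⋯b_n)`, `Σ φ(n)/(b₁⋯b_n)`, `Σ d(n)/(b₁⋯b_n)` with common denominator `b₁⋯b_N`
approximate the sums to exponent `1 + δ'` for infinitely many `N`. -/
theorem arithmetic_series_simultaneous_approx (δ : ℝ) (hδ : 1 / 3 < δ) (b : ℕ → ℕ)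
    (hb : ∀ n ≥ 1, 2 ≤ b n)
    (hgrowth : {N : ℕ |
      ((∑ d ∈ (N + 1).divisors, d : ℕ) : ℝ) * (∏ k ∈ Finset.Icc 1 N, (b k : ℝ)) ^ δ ≤ (b (N + 1) : ℝ) ∧
      ((N + 1).totient : ℝ) * (∏ k ∈ Finset.Icc 1 N, (b k : ℝ)) ^ δ ≤ (b (N + 1) : ℝ) ∧
      (((N + 1).divisors.card : ℝ)) * (∏ k ∈ Finset.Icc 1 N, (b k : ℝ)) ^ δ ≤
        (b (N + 1) : ℝ)}.Infinite)
    (β₁ β₂ β₃ : ℝ)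
    (hβ₁ : β₁ = ∑' n : ℕ, ((∑ d ∈ (n + 1).divisors, d : ℕ) : ℝ) / ∏ k ∈ Finset.Icc 1 (n + 1), (b k : ℝ))
    (hβ₂ : β₂ = ∑' n : ℕ, ((n + 1).totient : ℝ) / ∏ k ∈ Finset.Icc 1 (n + 1), (b k : ℝ))
    (hβ₃ : β₃ = ∑' n : ℕ,
      ((n + 1).divisors.card : ℝ) / ∏ k ∈ Finset.Icc 1 (n + 1), (b k : ℝ)) :
    ∃ δ' : ℝ, 1 / 3 < δ' ∧
      {N : ℕ |
        |β₁ - ∑ n ∈ Finset.range N,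
          ((∑ d ∈ (n + 1).divisors, d : ℕ) : ℝ) / ∏ k ∈ Finset.Icc 1 (n + 1), (b k : ℝ)| <
            1 / (∏ k ∈ Finset.Icc 1 N, (b k : ℝ)) ^ (1 + δ') ∧
        |β₂ - ∑ n ∈ Finset.range N,
          ((n + 1).totient : ℝ) / ∏ k ∈ Finset.Icc 1 (n + 1), (b k : ℝ)| <
            1 / (∏ k ∈ Finset.Icc 1 N, (b k : ℝ)) ^ (1 + δ') ∧
        |β₃ - ∑ n ∈ Finset.range N,
          ((n + 1).divisors.card : ℝ) / ∏ k ∈ Finset.Icc 1 (n + 1), (b k : ℝ)| <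
            1 / (∏ k ∈ Finset.Icc 1 N, (b k : ℝ)) ^ (1 + δ')}.Infinite := by
  have hb' : ∀ n ≥ 1, (2 : ℝ) ≤ b n := fun n hn => by exact_mod_cast hb n hn
  have hδ' : (1 / 3 + δ) / 2 < δ := by linarith
  have hσ := eventually_abs_tsum_sub_sum_range_lt hb' (k := 2)
    (a := fun m => ((∑ d ∈ m.divisors, d : ℕ) : ℝ))
    (fun m => by exact_mod_cast m.sum_divisors_le_sq) (fun _ => by positivity) hδ'
  have hφ := eventually_abs_tsum_sub_sum_range_lt hb' (k := 1) (a := fun m => (m.totient : ℝ))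
    (fun m => by simpa using m.totient_le) (fun _ => by positivity) hδ'
  have hd := eventually_abs_tsum_sub_sum_range_lt hb' (k := 1)
    (a := fun m => (m.divisors.card : ℝ))
    (fun m => by simpa using m.card_divisors_le_self) (fun _ => by positivity) hδ'
  subst hβ₁ hβ₂ hβ₃
  refine ⟨(1 / 3 + δ) / 2, by linarith, Nat.frequently_atTop_iff_infinite.1 <|
    (Nat.frequently_atTop_iff_infinite.2 hgrowth).mp ?_⟩
  filter_upwards [hσ, hφ, hd] with N hσN hφN hdN ⟨_, hgφ, _⟩
  have hφ1 : (1 : ℝ) ≤ (N + 1).totient := by exact_mod_cast (N + 1).totient_pos.2 N.succ_pos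
  have hgN := (le_mul_of_one_le_left (by positivity) hφ1).trans hgφ
  exact ⟨hσN hgN, hφN hgN, hdN hgN⟩
end
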